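/- Let ν⋆ be the measure on [-π/2,π/2]² supported on the diagonal y = x with density cos x · δ(x - y) (the pushforward of dγ = cos φ dφ under x ↦ (x,x)), and for 0 < λ ≤ 1 let c(x,y,λ) be as in the rough-disk resistance formula with ζ = arcsin(√(1-λ²cos²x)). Then the transversal component satisfies R_T[ν⋆, λ] = ∫ (3/4)((λ sin x + sin ζ)³/sin ζ) cos ζ · cos x dx = 3πλ/8, and the longitudinal component R_L[ν⋆, λ] = -∫ (3/4)((λ sin x + sin ζ)³/sin ζ) sin ζ · cos x dx = -3/2. -/

import Mathlib

open Real MeasureTheory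

noncomputable def gammaM : Measure ℝ :=
  (volume.restrict (Set.Icc (-(π/2)) (π/2))).withDensity
    (fun φ => ENNReal.ofReal (Real.cos φ))

/-- the retroreflector measure `ν⋆`, supported on the diagonal `y = x`. -/
noncomputable def nuStar : Measure (ℝ × ℝ) :=
  gammaM.map (fun x => (x, x))

noncomputable def zeta (x lam : ℝ) : ℝ :=
  Real.arcsin (Real.sqrt (1 - lam^2 * Real.cos x ^ 2))

noncomputable def cT (lam : ℝ) (p : ℝ × ℝ) : ℝ :=
  (3/4) * ((lam * Real.sin p.1 + Real.sin (zeta p.1 lam))^3 / Real.sin (zeta p.1 lam)) *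
    Real.cos ((p.1 - p.2)/2) * Real.cos (zeta p.1 lam + (p.1 - p.2)/2)

noncomputable def cL (lam : ℝ) (p : ℝ × ℝ) : ℝ :=
  -((3/4) * ((lam * Real.sin p.1 + Real.sin (zeta p.1 lam))^3 / Real.sin (zeta p.1 lam)) *
    Real.cos ((p.1 - p.2)/2) * Real.sin (zeta p.1 lam + (p.1 - p.2)/2))

/-!
On the diagonal `cos ((x - y) / 2) = 1`, so `ν⋆` turns both components into integrals over
`[-π/2, π/2]` against `cos x`, where `sin ζ = √(1 - λ² cos² x)` and `cos ζ = |λ| cos x`.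
Replacing the integrand by its even part removes the division by `sin ζ`, because
`((a + b)³ + (b - a)³) / b = 2 (b² + 3 a²)`. What remains is `∫ cos² = π/2` and
`∫ sin² cos² = π/8` for the transversal part, and for the longitudinal part the exact derivative
of `sin x * (1 - λ² cos² x) ^ (3/2)`.
-/

open Set

lemma integral_nuStar (f : ℝ × ℝ → ℝ) :
    ∫ p, f p ∂nuStar = ∫ x in Icc (-(π/2)) (π/2), cos x * f (x, x) := by
  have hdiag : MeasurableEmbedding fun x : ℝ => (x, x) :=
    .of_measurable_inverse (by fun_prop)
      (by rw [← Function.diag_def, range_diag]; exact measurableSet_diagonal)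
      measurable_fst fun _ => rfl
  rw [nuStar, hdiag.integral_map, gammaM,
    integral_withDensity_eq_integral_toReal_smul (by fun_prop) (by simp)]
  refine setIntegral_congr_fun measurableSet_Icc fun x hx => ?_
  simp [ENNReal.toReal_ofReal (cos_nonneg_of_mem_Icc hx)]

lemma cube_div_add_cube_neg_div {a b : ℝ} (h : b = 0 → a = 0) :
    (a + b) ^ 3 / b + (-a + b) ^ 3 / b = 2 * (b ^ 2 + 3 * a ^ 2) := by
  rcases eq_or_ne b 0 with rfl | hb
  · simp [h rfl]
  · field_simp
    ring

lemma abs_cube_div_le {a b : ℝ} (h : |a| ≤ |b|) : |(a + b) ^ 3 / b| ≤ 8 * b ^ 2 := by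
  rcases eq_or_ne b 0 with rfl | hb
  · simp
  have hab : |a + b| ≤ 2 * |b| := (abs_add_le a b).trans (by linarith)
  rw [abs_div, abs_pow, div_le_iff₀ (abs_pos.2 hb), ← sq_abs b]
  calc |a + b| ^ 3 ≤ (2 * |b|) ^ 3 := by gcongr
    _ = 8 * |b| ^ 2 * |b| := by ring

lemma integral_symm_eq_integral_even_part {f : ℝ → ℝ} {a : ℝ}
    (hf : IntervalIntegrable f volume (-a) a) :
    ∫ x in -a..a, f x = ∫ x in -a..a, (f x + f (-x)) / 2 := by
  have hneg : ∫ x in -a..a, f (-x) = ∫ x in -a..a, f x := by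
    simp [intervalIntegral.integral_comp_neg]
  rw [intervalIntegral.integral_div, intervalIntegral.integral_add hf
    (by simpa using ((IntervalIntegrable.iff_comp_neg (by simp)).1 hf).symm), hneg]
  ring

lemma setIntegral_Icc_eq_intervalIntegral (f : ℝ → ℝ) {a : ℝ} (ha : 0 ≤ a) :
    ∫ x in Icc (-a) a, f x = ∫ x in -a..a, f x := by
  rw [integral_Icc_eq_integral_Ioc, intervalIntegral.integral_of_le (by linarith)]

lemma zeta_neg (x lam : ℝ) : zeta (-x) lam = zeta x lam := by
  simp [zeta]

lemma continuous_zeta (lam : ℝ) : Continuous (zeta · lam) := by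
  unfold zeta
  fun_prop

lemma sin_zeta (x lam : ℝ) : sin (zeta x lam) = √(1 - lam ^ 2 * cos x ^ 2) :=
  sin_arcsin (by linarith [sqrt_nonneg (1 - lam ^ 2 * cos x ^ 2)])
    (sqrt_le_one.2 (by nlinarith [sq_nonneg (lam * cos x)]))

section

variable {lam : ℝ} (hlam : |lam| ≤ 1) (x : ℝ)
include hlam

lemma sq_mul_cos_sq_le_one : lam ^ 2 * cos x ^ 2 ≤ 1 := by
  rw [← mul_pow, ← sq_abs, abs_mul]
  exact pow_le_one₀ (by positivity)
    (mul_le_one₀ hlam (abs_nonneg _) (abs_cos_le_one x))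

lemma sin_zeta_sq : sin (zeta x lam) ^ 2 = 1 - lam ^ 2 * cos x ^ 2 := by
  rw [sin_zeta, sq_sqrt (by linarith [sq_mul_cos_sq_le_one hlam x])]

lemma cos_zeta : cos (zeta x lam) = |lam| * |cos x| := by
  rw [zeta, cos_arcsin, sq_sqrt (by linarith [sq_mul_cos_sq_le_one hlam x]), sub_sub_cancel,
    ← mul_pow, sqrt_sq_eq_abs, abs_mul]

lemma abs_mul_sin_le_abs_sin_zeta : |lam * sin x| ≤ |sin (zeta x lam)| := by
  rw [← sq_le_sq, mul_pow, sin_zeta_sq hlam]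
  have := sin_sq_add_cos_sq x
  have : lam ^ 2 ≤ 1 := by rw [← sq_abs]; exact pow_le_one₀ (abs_nonneg _) hlam
  nlinarith [sq_nonneg (sin x), sq_nonneg (cos x)]

end

noncomputable def resistanceFactor (lam x : ℝ) : ℝ :=
  (3/4) * ((lam * sin x + sin (zeta x lam)) ^ 3 / sin (zeta x lam))

lemma measurable_resistanceFactor (lam : ℝ) : Measurable (resistanceFactor lam) := by
  have := continuous_zeta lam
  unfold resistanceFactor
  fun_prop

section

variable {lam : ℝ} (hlam : |lam| ≤ 1)
include hlam

lemma resistanceFactor_add_neg (x : ℝ) :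
    resistanceFactor lam x + resistanceFactor lam (-x) =
      3/2 * (sin (zeta x lam) ^ 2 + 3 * lam ^ 2 * sin x ^ 2) := by
  have h := abs_mul_sin_le_abs_sin_zeta hlam x
  rw [resistanceFactor, resistanceFactor, sin_neg, zeta_neg, mul_neg, ← mul_add,
    cube_div_add_cube_neg_div fun hs => abs_nonpos_iff.1 (by simpa [hs] using h)]
  ring

lemma abs_resistanceFactor_le (x : ℝ) : |resistanceFactor lam x| ≤ 6 := by
  have h := abs_cube_div_le (abs_mul_sin_le_abs_sin_zeta hlam x)
  have hsin : sin (zeta x lam) ^ 2 ≤ 1 := sin_sq_le_one _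
  rw [resistanceFactor, abs_mul, abs_of_pos (by norm_num : (0:ℝ) < 3/4)]
  linarith

-- `sin ζ` vanishes at `x = 0` when `|λ| = 1`: integrability comes from the bound.
lemma intervalIntegrable_resistanceFactor (a b : ℝ) :
    IntervalIntegrable (resistanceFactor lam) volume a b :=
  (intervalIntegrable_const (c := (6:ℝ))).mono_fun'
    (measurable_resistanceFactor lam).aestronglyMeasurable
    (.of_forall fun x => abs_resistanceFactor_le hlam x)

lemma integral_resistanceFactor_mul_even {g : ℝ → ℝ} (hg : Continuous g)
    (hg_even : ∀ x, g (-x) = g x) (a : ℝ) :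
    ∫ x in -a..a, resistanceFactor lam x * g x =
      ∫ x in -a..a, 3/4 * (sin (zeta x lam) ^ 2 + 3 * lam ^ 2 * sin x ^ 2) * g x := by
  rw [integral_symm_eq_integral_even_part
    ((intervalIntegrable_resistanceFactor hlam _ _).mul_continuousOn hg.continuousOn)]
  congr 1 with x
  rw [hg_even, ← add_mul, resistanceFactor_add_neg hlam]
  ring

lemma integral_transversal_even_part :
    ∫ x in -(π/2)..π/2, 3/4 * (sin (zeta x lam) ^ 2 + 3 * lam ^ 2 * sin x ^ 2) *
      (cos (zeta x lam) * cos x) = 3 * π * |lam| / 8 := by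
  have hpt : ∀ x ∈ uIcc (-(π/2)) (π/2),
      3/4 * (sin (zeta x lam) ^ 2 + 3 * lam ^ 2 * sin x ^ 2) * (cos (zeta x lam) * cos x) =
        3 * |lam| / 4 * ((1 - lam ^ 2) * cos x ^ 2 + 4 * lam ^ 2 * (sin x ^ 2 * cos x ^ 2)) := by
    intro x hx
    rw [uIcc_of_le (by linarith [pi_pos])] at hx
    rw [sin_zeta_sq hlam, cos_zeta hlam, abs_of_nonneg (cos_nonneg_of_mem_Icc hx)]
    linear_combination (-3/4 * |lam| * lam ^ 2 * cos x ^ 2) * sin_sq_add_cos_sq x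
  rw [intervalIntegral.integral_congr hpt, intervalIntegral.integral_const_mul,
    intervalIntegral.integral_add (Continuous.intervalIntegrable (by fun_prop) _ _)
      (Continuous.intervalIntegrable (by fun_prop) _ _),
    intervalIntegral.integral_const_mul, intervalIntegral.integral_const_mul,
    integral_cos_sq, integral_sin_sq_mul_cos_sq]
  have h4 : sin (4 * (π/2)) = 0 := by
    rw [show 4 * (π/2) = (2:ℤ) * π by push_cast; ring, sin_int_mul_pi]
  have h4' : sin (4 * -(π/2)) = 0 := by
    rw [show 4 * -(π/2) = (-2:ℤ) * π by push_cast; ring, sin_int_mul_pi]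
  simp only [cos_pi_div_two, cos_neg, h4, h4']
  ring

lemma hasDerivAt_longitudinal_primitive (x : ℝ) :
    HasDerivAt (fun x => sin x * (1 - lam ^ 2 * cos x ^ 2) ^ (3/2 : ℝ))
      ((sin (zeta x lam) ^ 2 + 3 * lam ^ 2 * sin x ^ 2) * (sin (zeta x lam) * cos x)) x := by
  have hf : HasDerivAt (fun x => 1 - lam ^ 2 * cos x ^ 2) (2 * lam ^ 2 * cos x * sin x) x := by
    refine ((((hasDerivAt_cos x).pow 2).const_mul (lam ^ 2)).const_sub 1).congr_deriv ?_
    push_cast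
    ring
  have hf0 : 0 ≤ 1 - lam ^ 2 * cos x ^ 2 := by linarith [sq_mul_cos_sq_le_one hlam x]
  refine ((hasDerivAt_sin x).mul (hf.rpow_const (p := 3/2) (Or.inr (by norm_num)))).congr_deriv ?_
  rw [show (3/2 : ℝ) - 1 = 1/2 by norm_num, show (3/2 : ℝ) = 1 + 1/2 by norm_num,
    rpow_add' hf0 (by norm_num), rpow_one, ← sqrt_eq_rpow, ← sin_zeta, ← sin_zeta_sq hlam]
  ring

lemma integral_longitudinal_even_part :
    ∫ x in -(π/2)..π/2, 3/4 * (sin (zeta x lam) ^ 2 + 3 * lam ^ 2 * sin x ^ 2) *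
      (sin (zeta x lam) * cos x) = 3/2 := by
  simp_rw [mul_assoc (3/4 : ℝ)]
  rw [intervalIntegral.integral_const_mul, intervalIntegral.integral_eq_sub_of_hasDerivAt
    (fun x _ => hasDerivAt_longitudinal_primitive hlam x)]
  · simp [cos_pi_div_two]
    norm_num
  · have := continuous_zeta lam
    exact Continuous.intervalIntegrable (by fun_prop) _ _

lemma integral_transversal :
    ∫ x in Icc (-(π/2)) (π/2), resistanceFactor lam x * cos (zeta x lam) * cos x =
      3 * π * |lam| / 8 := by
  have := continuous_zeta lam
  rw [setIntegral_Icc_eq_intervalIntegral _ (by positivity)]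
  simp_rw [mul_assoc (resistanceFactor lam _)]
  rw [integral_resistanceFactor_mul_even hlam (g := fun x => cos (zeta x lam) * cos x)
    (by fun_prop) (by simp [zeta_neg])]
  exact integral_transversal_even_part hlam

lemma integral_longitudinal :
    ∫ x in Icc (-(π/2)) (π/2), resistanceFactor lam x * sin (zeta x lam) * cos x = 3/2 := by
  have := continuous_zeta lam
  rw [setIntegral_Icc_eq_intervalIntegral _ (by positivity)]
  simp_rw [mul_assoc (resistanceFactor lam _)]
  rw [integral_resistanceFactor_mul_even hlam (g := fun x => sin (zeta x lam) * cos x)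
    (by fun_prop) (by simp [zeta_neg])]
  exact integral_longitudinal_even_part hlam

end

lemma cT_diag (lam x : ℝ) : cT lam (x, x) = resistanceFactor lam x * cos (zeta x lam) := by
  simp [cT, resistanceFactor]

lemma cL_diag (lam x : ℝ) : cL lam (x, x) = -(resistanceFactor lam x * sin (zeta x lam)) := by
  simp [cL, resistanceFactor]

theorem stmt_8 (lam : ℝ) (h0 : 0 < lam) (h1 : lam ≤ 1) :
    ((∫ p, cT lam p ∂nuStar) =
      ∫ x in Set.Icc (-(π/2)) (π/2),
        (3/4) * ((lam * Real.sin x + Real.sin (zeta x lam))^3 / Real.sin (zeta x lam)) *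
          Real.cos (zeta x lam) * Real.cos x) ∧
    (∫ p, cT lam p ∂nuStar) = 3 * π * lam / 8 ∧
    ((∫ p, cL lam p ∂nuStar) =
      -∫ x in Set.Icc (-(π/2)) (π/2),
        (3/4) * ((lam * Real.sin x + Real.sin (zeta x lam))^3 / Real.sin (zeta x lam)) *
          Real.sin (zeta x lam) * Real.cos x) ∧
    (∫ p, cL lam p ∂nuStar) = -(3/2) := by
  have hlam : |lam| ≤ 1 := abs_le.2 ⟨by linarith, h1⟩
  have hT : ∫ p, cT lam p ∂nuStar =
      ∫ x in Icc (-(π/2)) (π/2), resistanceFactor lam x * cos (zeta x lam) * cos x := by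
    rw [integral_nuStar]
    congr 1 with x
    rw [cT_diag]
    ring
  have hL : ∫ p, cL lam p ∂nuStar =
      -∫ x in Icc (-(π/2)) (π/2), resistanceFactor lam x * sin (zeta x lam) * cos x := by
    rw [integral_nuStar, ← integral_neg]
    congr 1 with x
    rw [cL_diag]
    ring
  refine ⟨hT, ?_, hL, ?_⟩
  · rw [hT, integral_transversal hlam, abs_of_pos h0]
  · rw [hL, integral_longitudinal hlam]
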